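/- Let i ≥ 2 be an integer, let h₁, …, h_i be integers with |h_j| ≤ j for every j, and let δ_j ∈ ℝ^d be given values for 1 ≤ j < i. For 1 ≤ j < i define the attention score s_j = φ(h_i, 1) · φ(h_j, 1) − z(f(j)), where z(x) = x/√(2x² + 2) and f is the tie-breaking function, let M = {j : 1 ≤ j < i, s_j = max_{1 ≤ j' < i} s_{j'}}, and let δ̄ = (1/|M|) Σ_{j ∈ M} δ_j be the saturated-attention output of the values. If there exists j < i with h_j = h_i, then δ̄ = δ_{j*}, where j* is the greatest index j < i with h_j = h_i; that is, the head retrieves exactly the value at the rightmost matching position. -/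

import Mathlib

/-!
`⟪lnHash a 1, lnHash b 1⟫` is the cosine of the angle between `(a, 1)` and `(b, 1)`; by Lagrange's
identity its square plus `(a - b)² / ((a² + 1)(b² + 1))` equals `1`, so `1 - cos ≥ sin² / 2` gives,
for integers `b ≠ a` with `|a| ≤ m`, a score gap of at least `1 / (2 (m² + 1)((m + 1)² + 1))`.
At a matching position the score is `1 - z(f j)`, so among matches the rightmost one `j*` wins,
since `f` decreases and `z` increases. Every non-matching position loses against `j*` because
`|h i| = |h j*| ≤ j*` and `z(f j*) ≤ f j*` lies below that gap. Hence the set of maximisers is `{j*}`.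
-/

open scoped RealInnerProductSpace

/-- Layer norm: subtract the mean, then normalize to unit Euclidean norm. -/
noncomputable def layerNorm {ι : Type*} [Fintype ι] (v : EuclideanSpace ℝ ι) :
    EuclideanSpace ℝ ι :=
  let c : EuclideanSpace ℝ ι := WithLp.toLp 2 fun j => v j - (∑ l, v l) / (Fintype.card ι)
  ‖c‖⁻¹ • c

/-- The layer-norm hash φ(x, y) = layer_norm(⟨x, y, −x, −y⟩) ∈ ℝ⁴. -/
noncomputable def lnHash (x y : ℝ) : EuclideanSpace ℝ (Fin 4) :=
  layerNorm (WithLp.toLp 2 ![x, y, -x, -y] : EuclideanSpace ℝ (Fin 4))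

/-- Two-argument tie-breaking recursion: f(i, 0) = 1/i, f(i, k+1) = f(i−1, k) − f(i, k). -/
noncomputable def fTie : ℕ → ℝ → ℝ
  | 0, i => 1 / i
  | (k + 1), i => fTie k (i - 1) - fTie k i

/-- The tie-breaking function f on integers i ≥ 1, with ε = 10⁻¹⁰. -/
noncomputable def tieBreak (i : ℤ) : ℝ :=
  if i ≤ 4 then 1 / 1000 - (10 : ℝ)⁻¹ ^ 10 * (i : ℝ) else fTie 3 (i : ℝ) / 100

/-- z(x) = x/√(2x² + 2), the first coordinate of φ(x, 1). -/
noncomputable def zfn (x : ℝ) : ℝ := x / Real.sqrt (2 * x ^ 2 + 2)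

lemma layerNorm_of_sum_eq_zero {ι : Type*} [Fintype ι] {v : EuclideanSpace ℝ ι}
    (hv : ∑ l, v l = 0) : layerNorm v = ‖v‖⁻¹ • v := by
  simp [layerNorm, hv]

lemma inner_lnHash_one (a b : ℝ) :
    ⟪lnHash a 1, lnHash b 1⟫ = (a * b + 1) / Real.sqrt ((a ^ 2 + 1) * (b ^ 2 + 1)) := by
  set v : ℝ → EuclideanSpace ℝ (Fin 4) := fun x => WithLp.toLp 2 ![x, 1, -x, -1]
  have hsum (x : ℝ) : ∑ l, v x l = 0 := by simp [v, Fin.sum_univ_four]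
  have hnorm (x : ℝ) : ‖v x‖ = Real.sqrt 2 * Real.sqrt (x ^ 2 + 1) := by
    rw [EuclideanSpace.norm_eq, ← Real.sqrt_mul zero_le_two]
    congr 1
    simp [v, Fin.sum_univ_four]
    ring
  have hinner : ⟪v a, v b⟫ = 2 * (a * b + 1) := by
    simp [v, PiLp.inner_apply, Fin.sum_univ_four]
    ring
  change ⟪layerNorm (v a), layerNorm (v b)⟫ = _
  rw [layerNorm_of_sum_eq_zero (hsum a), layerNorm_of_sum_eq_zero (hsum b),
    real_inner_smul_left, real_inner_smul_right, hinner, hnorm, hnorm,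
    Real.sqrt_mul (by positivity)]
  have h2 : Real.sqrt 2 ^ 2 = 2 := Real.sq_sqrt zero_le_two
  have : 0 < Real.sqrt 2 := by positivity
  have : 0 < Real.sqrt (a ^ 2 + 1) := by positivity
  have : 0 < Real.sqrt (b ^ 2 + 1) := by positivity
  field_simp
  linear_combination (-(a * b + 1)) * h2

lemma inner_lnHash_one_self (a : ℝ) : ⟪lnHash a 1, lnHash a 1⟫ = 1 := by
  rw [inner_lnHash_one, Real.sqrt_mul_self (by positivity), ← sq, div_self (by positivity)]

lemma le_one_sub_half_of_sq_add_eq_one {c t : ℝ} (h : c ^ 2 + t = 1) : c ≤ 1 - t / 2 := by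
  nlinarith [sq_nonneg (1 - c)]

lemma inner_lnHash_one_sq_add (a b : ℝ) :
    ⟪lnHash a 1, lnHash b 1⟫ ^ 2 + (a - b) ^ 2 / ((a ^ 2 + 1) * (b ^ 2 + 1)) = 1 := by
  rw [inner_lnHash_one, div_pow, Real.sq_sqrt (by positivity), ← add_div,
    div_eq_one_iff_eq (by positivity)]
  ring

lemma sq_add_one_le_of_one_le_abs_sub {a b : ℝ} (h : 1 ≤ |a - b|) :
    b ^ 2 + 1 ≤ (a - b) ^ 2 * ((|a| + 1) ^ 2 + 1) := by
  have hb : |b| ≤ |a - b| * (|a| + 1) := by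
    calc |b| = |a - (a - b)| := by ring_nf
      _ ≤ |a| + |a - b| := abs_sub _ _
      _ ≤ |a - b| * (|a| + 1) := by nlinarith [abs_nonneg a]
  have hb2 : b ^ 2 ≤ (|a - b| * (|a| + 1)) ^ 2 := by
    rw [← sq_abs b]
    exact pow_le_pow_left₀ (abs_nonneg b) hb 2
  rw [← sq_abs (a - b)]
  nlinarith

/-- Lower bound for the gap `1 - ⟪lnHash a 1, lnHash b 1⟫` between distinct integers with `|a| ≤ m`. -/
noncomputable def hashMargin (m : ℝ) : ℝ := 1 / (2 * ((m ^ 2 + 1) * ((m + 1) ^ 2 + 1)))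

lemma hashMargin_le_hashMargin {m n : ℝ} (hm : 0 ≤ m) (hmn : m ≤ n) :
    hashMargin n ≤ hashMargin m := by
  unfold hashMargin
  gcongr

lemma inner_lnHash_one_le_one_sub_hashMargin {a b : ℤ} (hab : a ≠ b) :
    ⟪lnHash a 1, lnHash b 1⟫ ≤ 1 - hashMargin |(a : ℝ)| := by
  have hsep : (b : ℝ) ^ 2 + 1 ≤ ((a : ℝ) - b) ^ 2 * ((|(a : ℝ)| + 1) ^ 2 + 1) := by
    apply sq_add_one_le_of_one_le_abs_sub
    exact_mod_cast Int.one_le_abs (sub_ne_zero.2 hab)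
  refine (le_one_sub_half_of_sq_add_eq_one (inner_lnHash_one_sq_add a b)).trans ?_
  gcongr
  rw [hashMargin, sq_abs, div_div, div_le_div_iff₀ (by positivity) (by positivity)]
  nlinarith [mul_le_mul_of_nonneg_left hsep (by positivity : (0 : ℝ) ≤ 2 * ((a : ℝ) ^ 2 + 1))]

lemma zfn_pos {x : ℝ} (hx : 0 < x) : 0 < zfn x := by
  unfold zfn
  positivity

lemma zfn_le_self {x : ℝ} (hx : 0 ≤ x) : zfn x ≤ x := by
  have h1 : 1 ≤ Real.sqrt (2 * x ^ 2 + 2) := Real.one_le_sqrt.2 (by nlinarith)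
  exact div_le_self hx h1

lemma zfn_strictMonoOn : StrictMonoOn zfn (Set.Ici 0) := by
  intro x (hx : 0 ≤ x) y (hy : 0 ≤ y) hxy
  have hsx : 0 < Real.sqrt (2 * x ^ 2 + 2) := by positivity
  have hsy : 0 < Real.sqrt (2 * y ^ 2 + 2) := by positivity
  unfold zfn
  rw [div_lt_div_iff₀ hsx hsy]
  refine lt_of_pow_lt_pow_left₀ 2 (by positivity) ?_
  rw [mul_pow, mul_pow, Real.sq_sqrt (by positivity), Real.sq_sqrt (by positivity)]
  nlinarith

lemma fTie_three {x : ℝ} (hx : 3 < x) :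
    fTie 3 x = 6 / (x * (x - 1) * (x - 2) * (x - 3)) := by
  have : x ≠ 0 := by linarith
  have : x - 1 ≠ 0 := by linarith
  have : x - 1 - 1 ≠ 0 := by linarith
  have : x - 1 - 1 - 1 ≠ 0 := by linarith
  have : x - 2 ≠ 0 := by linarith
  have : x - 3 ≠ 0 := by linarith
  simp only [fTie]
  field_simp
  ring

lemma mul_sub_one_mul_sub_two_mul_sub_three_pos {x : ℝ} (hx : 3 < x) :
    0 < x * (x - 1) * (x - 2) * (x - 3) := by
  apply_rules [mul_pos] <;> linarith

lemma tieBreak_of_five_le {j : ℤ} (hj : 5 ≤ j) :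
    tieBreak j = 6 / ((j : ℝ) * (j - 1) * (j - 2) * (j - 3)) / 100 := by
  have : (5 : ℝ) ≤ j := by exact_mod_cast hj
  rw [tieBreak, if_neg (by omega), fTie_three (by linarith)]

lemma tieBreak_le_hashMargin {j : ℤ} (hj : 1 ≤ j) : tieBreak j ≤ hashMargin j := by
  by_cases h4 : j ≤ 4
  · rw [tieBreak, if_pos h4, hashMargin]
    interval_cases j <;> norm_num
  · have h5 : (5 : ℝ) ≤ j := by exact_mod_cast (by omega : (5 : ℤ) ≤ j)
    have := mul_sub_one_mul_sub_two_mul_sub_three_pos (x := j) (by linarith)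
    rw [tieBreak_of_five_le (by omega), hashMargin, div_div,
      div_le_div_iff₀ (by positivity) (by positivity)]
    obtain ⟨y, hy, hjy⟩ : ∃ y : ℝ, 0 ≤ y ∧ (j : ℝ) = y + 5 := ⟨j - 5, by linarith, by ring⟩
    rw [hjy]
    nlinarith [pow_nonneg hy 3, pow_nonneg hy 4, sq_nonneg y]

lemma tieBreak_pos (j : ℤ) : 0 < tieBreak j := by
  by_cases h4 : j ≤ 4
  · have : (j : ℝ) ≤ 4 := by exact_mod_cast h4
    rw [tieBreak, if_pos h4]
    norm_num
    linarith
  · have h5 : (5 : ℝ) ≤ j := by exact_mod_cast (by omega : (5 : ℤ) ≤ j)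
    rw [tieBreak_of_five_le (by omega)]
    have := mul_sub_one_mul_sub_two_mul_sub_three_pos (x := j) (by linarith)
    positivity

lemma tieBreak_strictAntiOn : StrictAntiOn tieBreak (Set.Ici 1) := by
  intro j' (hj' : 1 ≤ j') j (hj : 1 ≤ j) hlt
  have hlt' : (j' : ℝ) < j := by exact_mod_cast hlt
  by_cases h4 : j ≤ 4
  · rw [tieBreak, tieBreak, if_pos h4, if_pos (by omega)]
    linarith
  by_cases h4' : j' ≤ 4
  · -- the two branches of `tieBreak` are separated by `hashMargin 5 = 1 / 1924`
    have hj5 : (5 : ℝ) ≤ j := by exact_mod_cast (by omega : (5 : ℤ) ≤ j)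
    have hj'4 : (j' : ℝ) ≤ 4 := by exact_mod_cast h4'
    calc tieBreak j ≤ hashMargin j := tieBreak_le_hashMargin hj
      _ ≤ hashMargin 5 := hashMargin_le_hashMargin (by norm_num) hj5
      _ < tieBreak j' := by
        rw [tieBreak, if_pos h4', hashMargin]
        norm_num
        linarith
  · have hj'5 : (5 : ℝ) ≤ j' := by exact_mod_cast (by omega : (5 : ℤ) ≤ j')
    rw [tieBreak_of_five_le (by omega), tieBreak_of_five_le (by omega)]
    have := mul_sub_one_mul_sub_two_mul_sub_three_pos (x := j') (by linarith)
    gcongr <;> nlinarith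

lemma Finset.filter_forall_le_eq_singleton {α β : Type*} [LinearOrder β] {s : Finset α}
    {f : α → β} {a : α} (ha : a ∈ s) (hlt : ∀ b ∈ s, b ≠ a → f b < f a) :
    s.filter (fun b => ∀ c ∈ s, f c ≤ f b) = {a} := by
  refine Finset.eq_singleton_iff_unique_mem.2 ⟨Finset.mem_filter.2 ⟨ha, fun c hc => ?_⟩, ?_⟩
  · rcases eq_or_ne c a with rfl | hne
    exacts [le_rfl, (hlt c hc hne).le]
  · intro b hb
    obtain ⟨hbs, hbmax⟩ := Finset.mem_filter.1 hb
    by_contra hne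
    exact (hlt b hbs hne).not_ge (hbmax a ha)

noncomputable def hashScore (h : ℤ → ℤ) (i j : ℤ) : ℝ :=
  ⟪lnHash ((h i : ℤ) : ℝ) 1, lnHash ((h j : ℤ) : ℝ) 1⟫ - zfn (tieBreak j)

section hashScore

variable {h : ℤ → ℤ} {i j : ℤ}

lemma hashScore_of_eq (hj : h j = h i) : hashScore h i j = 1 - zfn (tieBreak j) := by
  rw [hashScore, hj, inner_lnHash_one_self]

lemma hashScore_lt_of_ne {m : ℤ} (hm : 1 ≤ m) (him : |h i| ≤ m) (hj : h j ≠ h i) :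
    hashScore h i j < 1 - zfn (tieBreak m) := by
  have him' : |((h i : ℤ) : ℝ)| ≤ m := by exact_mod_cast him
  have hinner := inner_lnHash_one_le_one_sub_hashMargin (Ne.symm hj)
  have hmargin := hashMargin_le_hashMargin (abs_nonneg _) him'
  have htie := tieBreak_le_hashMargin hm
  have hz := zfn_le_self (tieBreak_pos m).le
  have hzj := zfn_pos (tieBreak_pos j)
  rw [hashScore]
  linarith

lemma hashScore_lt_hashScore_rightmost {jstar : ℤ} (hbound : |h jstar| ≤ jstar)
    (hj1 : 1 ≤ jstar) (hjmatch : h jstar = h i)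
    (hjgreatest : ∀ j, jstar < j → j < i → h j ≠ h i)
    (hj : j ∈ Finset.Ico 1 i) (hne : j ≠ jstar) :
    hashScore h i j < hashScore h i jstar := by
  obtain ⟨hj1', hji⟩ := Finset.mem_Ico.1 hj
  rw [hashScore_of_eq hjmatch]
  by_cases hmatch : h j = h i
  · have hlt : j < jstar := by
      rcases lt_trichotomy j jstar with hlt | rfl | hgt
      exacts [hlt, absurd rfl hne, absurd hmatch (hjgreatest j hgt hji)]
    rw [hashScore_of_eq hmatch]
    have := zfn_strictMonoOn (tieBreak_pos jstar).le (tieBreak_pos j).le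
      (tieBreak_strictAntiOn hj1' (hj1'.trans hlt.le) hlt)
    linarith
  · exact hashScore_lt_of_ne hj1 (hjmatch ▸ hbound) hmatch

end hashScore

theorem ranked_rightmost_general (d : ℕ) (i : ℤ) (h : ℤ → ℤ)
    (hbound : ∀ j, 1 ≤ j → j ≤ i → |h j| ≤ j)
    (δ : ℤ → EuclideanSpace ℝ (Fin d))
    (jstar : ℤ) (hj1 : 1 ≤ jstar) (hj2 : jstar < i) (hjmatch : h jstar = h i)
    (hjgreatest : ∀ j, jstar < j → j < i → h j ≠ h i) :
    let s : ℤ → ℝ :=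
      fun j => ⟪lnHash ((h i : ℤ) : ℝ) 1, lnHash ((h j : ℤ) : ℝ) 1⟫ - zfn (tieBreak j)
    let J : Finset ℤ := Finset.Ico 1 i
    let M : Finset ℤ := J.filter fun j => ∀ j' ∈ J, s j' ≤ s j
    (M.card : ℝ)⁻¹ • ∑ j ∈ M, δ j = δ jstar := by
  intro s J M
  have hM : M = {jstar} :=
    Finset.filter_forall_le_eq_singleton (Finset.mem_Ico.2 ⟨hj1, hj2⟩) fun j hj hne =>
      hashScore_lt_hashScore_rightmost (hbound jstar hj1 hj2.le) hj1 hjmatch hjgreatest hj hne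
  rw [hM, Finset.card_singleton, Finset.sum_singleton, Nat.cast_one, inv_one, one_smul]

/-- Rightmost retrieval via the layer-norm hash (Lemma "ranked-rightmost"):
if some j < i has h_j = h_i, then the saturated-attention output of the values δ_j under
the scores s_j = φ(h_i,1)·φ(h_j,1) − z(f(j)) equals δ_{j*} for the greatest such j*. -/
theorem ranked_rightmost (d : ℕ) (i : ℤ) (hi : 2 ≤ i) (h : ℤ → ℤ)
    (hbound : ∀ j, 1 ≤ j → j ≤ i → |h j| ≤ j)
    (δ : ℤ → EuclideanSpace ℝ (Fin d))
    (jstar : ℤ) (hj1 : 1 ≤ jstar) (hj2 : jstar < i) (hjmatch : h jstar = h i)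
    (hjgreatest : ∀ j, jstar < j → j < i → h j ≠ h i) :
    let s : ℤ → ℝ :=
      fun j => ⟪lnHash ((h i : ℤ) : ℝ) 1, lnHash ((h j : ℤ) : ℝ) 1⟫ - zfn (tieBreak j)
    let J : Finset ℤ := Finset.Ico 1 i
    let M : Finset ℤ := J.filter fun j => ∀ j' ∈ J, s j' ≤ s j
    (M.card : ℝ)⁻¹ • ∑ j ∈ M, δ j = δ jstar :=
  ranked_rightmost_general d i h hbound δ jstar hj1 hj2 hjmatch hjgreatest
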